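/- arXiv:1812.06715 — 5 statements merged into one kernel-verified Lean document; each statement's English description precedes it below -/
import Mathlib

section
/- The path graph P_n on n ≥ 3 vertices is antimagic: there exists a bijection φ from its n−1 edges to {1,…,n−1} such that for any two distinct vertices u, v, the sum of labels of edges incident to u differs from the sum of labels of edges incident to v. -/
/-!
Label the edge `{v_i, v_{i+1}}` by `i + 1`. The vertex `v_u` then has sum `2u + 1` for
`u < n - 1`, and the last vertex has sum `n - 1`; these collide only when `n` is even. In that
case swapping the last two labels gives the sums `1, 3, …, 2n - 7, 2n - 4, 2n - 3, n - 2`,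
which are again pairwise distinct.
-/

open SimpleGraph Finset
open scoped Classical

theorem Finset.sum_range_filter_eq_or_succ_eq {M : Type*} [AddCommMonoid M] (f : ℕ → M)
    {m u : ℕ} (hu : u ≤ m) :
    ∑ i ∈ (range m).filter (fun i => i = u ∨ i + 1 = u), f i =
      (if u < m then f u else 0) + (if 0 < u then f (u - 1) else 0) := by
  rw [filter_or, sum_union (disjoint_filter.mpr fun i _ h h' => by omega), filter_eq',
    apply_ite (∑ x ∈ ·, f x), sum_singleton, sum_empty]
  congr 1
  · simp only [mem_range]
  · cases u with
    | zero => simp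
    | succ k => simp [filter_eq', Nat.lt_of_succ_le hu]

namespace SimpleGraph

def pathEdgeIndex {n : ℕ} : Sym2 (Fin n) → ℕ :=
  Sym2.lift ⟨fun a b => min a.val b.val, fun _ _ => Nat.min_comm _ _⟩

lemma pathEdgeIndex_mk {n : ℕ} {a b : Fin n} (h : a.val + 1 = b.val) :
    pathEdgeIndex s(a, b) = a.val :=
  Nat.min_eq_left (by rw [← h]; exact Nat.le_succ _)

lemma exists_eq_mk_of_mem_edgeSet_pathGraph {n : ℕ} {e : Sym2 (Fin n)}
    (he : e ∈ (pathGraph n).edgeSet) : ∃ a b : Fin n, a.val + 1 = b.val ∧ e = s(a, b) := by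
  induction e with
  | _ a b =>
    rcases pathGraph_adj.mp he with h | h
    · exact ⟨a, b, h, rfl⟩
    · exact ⟨b, a, h, Sym2.eq_swap⟩

theorem bijOn_pathEdgeIndex (n : ℕ) :
    Set.BijOn pathEdgeIndex (pathGraph n).edgeSet (Set.Iio (n - 1)) := by
  refine ⟨?_, ?_, ?_⟩
  · intro e he
    obtain ⟨a, b, hab, rfl⟩ := exists_eq_mk_of_mem_edgeSet_pathGraph he
    rw [Set.mem_Iio, pathEdgeIndex_mk hab]
    omega
  · intro e he e' he' h
    obtain ⟨a, b, hab, rfl⟩ := exists_eq_mk_of_mem_edgeSet_pathGraph he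
    obtain ⟨c, d, hcd, rfl⟩ := exists_eq_mk_of_mem_edgeSet_pathGraph he'
    rw [pathEdgeIndex_mk hab, pathEdgeIndex_mk hcd] at h
    obtain rfl : a = c := Fin.ext h
    obtain rfl : b = d := Fin.ext (by omega)
    rfl
  · intro i hi
    rw [Set.mem_Iio] at hi
    exact ⟨s(⟨i, by omega⟩, ⟨i + 1, by omega⟩), pathGraph_adj.mpr (Or.inl rfl),
      pathEdgeIndex_mk rfl⟩

/-- The label sum at vertex `u` of the path on `n` vertices whose edge `{v_i, v_{i+1}}`
carries the label `f i`. -/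
def pathVertexSum {M : Type*} [AddCommMonoid M] (f : ℕ → M) (n u : ℕ) : M :=
  (if u < n - 1 then f u else 0) + (if 0 < u then f (u - 1) else 0)

theorem sum_incident_pathGraph {M : Type*} [AddCommMonoid M] (f : ℕ → M) {n : ℕ} (u : Fin n) :
    ∑ e ∈ univ.filter (fun e => e ∈ (pathGraph n).edgeSet ∧ u ∈ e), f (pathEdgeIndex e) =
      pathVertexSum f n u := by
  have hreindex : ∑ e ∈ univ.filter (fun e => e ∈ (pathGraph n).edgeSet ∧ u ∈ e),
      f (pathEdgeIndex e) = ∑ i ∈ (range (n - 1)).filter (fun i => i = u.val ∨ i + 1 = u.val), f i := by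
    refine sum_bij (fun e _ => pathEdgeIndex e) ?_ ?_ ?_ (fun _ _ => rfl)
    · intro e he
      simp only [mem_filter, mem_univ, true_and] at he
      obtain ⟨a, b, hab, rfl⟩ := exists_eq_mk_of_mem_edgeSet_pathGraph he.1
      have := Sym2.mem_iff.mp he.2
      simp only [mem_filter, mem_range, pathEdgeIndex_mk hab, Fin.ext_iff] at this ⊢
      omega
    · intro e he e' he' h
      simp only [mem_filter, mem_univ, true_and] at he he'
      exact (bijOn_pathEdgeIndex n).injOn he.1 he'.1 h
    · intro i hi
      simp only [mem_filter, mem_range] at hi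
      refine ⟨s(⟨i, by omega⟩, ⟨i + 1, by omega⟩), ?_, pathEdgeIndex_mk rfl⟩
      simp only [mem_filter, mem_univ, true_and, Sym2.mem_iff, Fin.ext_iff]
      exact ⟨pathGraph_adj.mpr (Or.inl rfl), by omega⟩
  rw [hreindex, sum_range_filter_eq_or_succ_eq f (by omega), pathVertexSum]

end SimpleGraph

def pathLabel (n i : ℕ) : ℕ :=
  if n % 2 = 0 ∧ i = n - 3 then n - 1 else if n % 2 = 0 ∧ i = n - 2 then n - 2 else i + 1

theorem bijOn_pathLabel (n : ℕ) :
    Set.BijOn (pathLabel n) (Set.Iio (n - 1)) (Set.Icc 1 (n - 1)) := by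
  refine ⟨fun i hi => ?_, fun i hi j hj h => ?_, fun k hk => ?_⟩
  · simp only [Set.mem_Iio, Set.mem_Icc] at hi ⊢
    unfold pathLabel
    split_ifs <;> omega
  · simp only [Set.mem_Iio] at hi hj
    unfold pathLabel at h
    split_ifs at h <;> omega
  · simp only [Set.mem_Icc, Set.mem_image, Set.mem_Iio] at hk ⊢
    by_cases h1 : n % 2 = 0 ∧ k = n - 1
    · exact ⟨n - 3, by omega, by unfold pathLabel; split_ifs <;> omega⟩
    by_cases h2 : n % 2 = 0 ∧ k = n - 2
    · exact ⟨n - 2, by omega, by unfold pathLabel; split_ifs <;> omega⟩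
    · exact ⟨k - 1, by omega, by unfold pathLabel; split_ifs <;> omega⟩

theorem pathVertexSum_pathLabel {n u : ℕ} (hn : 3 ≤ n) (hu : u < n) :
    pathVertexSum (pathLabel n) n u =
      if u = n - 1 then (if n % 2 = 0 then n - 2 else n - 1)
      else if n % 2 = 0 ∧ u = n - 3 then 2 * n - 4
      else if n % 2 = 0 ∧ u = n - 2 then 2 * n - 3
      else 2 * u + 1 := by
  unfold pathVertexSum pathLabel
  split_ifs <;> omega

theorem injOn_pathVertexSum_pathLabel {n : ℕ} (hn : 3 ≤ n) :
    Set.InjOn (pathVertexSum (pathLabel n) n) (Set.Iio n) := by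
  intro u hu v hv h
  rw [pathVertexSum_pathLabel hn hu, pathVertexSum_pathLabel hn hv] at h
  split_ifs at h <;> omega

/-- The path graph on n ≥ 3 vertices is antimagic: there is a
bijection φ from its edges to {1,…,n−1} such that any two distinct vertices have
different sums of labels over incident edges. -/
theorem stmt_0 (n : ℕ) (hn : 3 ≤ n) :
    ∃ φ : Sym2 (Fin n) → ℕ,
      Set.BijOn φ (SimpleGraph.pathGraph n).edgeSet (Set.Icc 1 (n - 1)) ∧
      ∀ u v : Fin n, u ≠ v →
        (∑ e ∈ Finset.univ.filter
            (fun e => e ∈ (SimpleGraph.pathGraph n).edgeSet ∧ u ∈ e), φ e) ≠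
        (∑ e ∈ Finset.univ.filter
            (fun e => e ∈ (SimpleGraph.pathGraph n).edgeSet ∧ v ∈ e), φ e) := by
  refine ⟨fun e => pathLabel n (pathEdgeIndex e),
    (bijOn_pathLabel n).comp (bijOn_pathEdgeIndex n), fun u v huv h => huv ?_⟩
  rw [sum_incident_pathGraph, sum_incident_pathGraph] at h
  exact Fin.ext (injOn_pathVertexSum_pathLabel hn u.isLt v.isLt h)
end

section
/- Let p ≥ 1 and m ≥ p be integers, and consider a labeling of a path (v_0,…,v_p) where edge e_i = {v_{i−1}, v_i} receives label φ(e_i) = ⌈i/2⌉ if i ≢ p (mod 2), and φ(e_i) = m − ⌊p/2⌋ + ⌈i/2⌉ if i ≡ p (mod 2). Then the function g(i) = φ(e_i) + φ(e_{i+1}) for 1 ≤ i ≤ p−1 is strictly increasing in i. -/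
/-! Of two consecutive edges exactly one has the parity of `p`, so the offset `m - ⌊p/2⌋` enters
`g(i)` exactly once, and `⌈i/2⌉ + ⌈(i+1)/2⌉ = i + 1`. Hence `g(i) = m - ⌊p/2⌋ + i + 1`. -/

theorem Nat.succ_div_two_add_succ_succ_div_two (i : ℕ) : (i + 1) / 2 + (i + 2) / 2 = i + 1 := by
  omega

theorem apply_add_apply_succ_of_parity_offset (p c : ℕ) (φ : ℕ → ℕ)
    (hφ : ∀ i, 1 ≤ i → i ≤ p → φ i = if i % 2 = p % 2 then (i + 1) / 2 else c + (i + 1) / 2)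
    {i : ℕ} (hi : 1 ≤ i) (hip : i + 1 ≤ p) :
    φ i + φ (i + 1) = c + (i + 1) := by
  have hhalf := Nat.succ_div_two_add_succ_succ_div_two i
  rw [hφ i hi (by omega), hφ (i + 1) (by omega) hip]
  rcases eq_or_ne (i % 2) (p % 2) with h | h
  · rw [if_pos h, if_neg (by omega)]
    omega
  · rw [if_neg h, if_pos (by omega)]
    omega

theorem stmt_2_general (p m : ℕ)
    (φ : ℕ → ℕ)
    (hφ : ∀ i, 1 ≤ i → i ≤ p →
      φ i = if i % 2 = p % 2 then (i + 1) / 2 else m - p / 2 + (i + 1) / 2) :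
    ∀ i j, 1 ≤ i → i < j → j ≤ p - 1 →
      φ i + φ (i + 1) < φ j + φ (j + 1) := by
  intro i j hi hij hj
  rw [apply_add_apply_succ_of_parity_offset p _ φ hφ hi (by omega),
    apply_add_apply_succ_of_parity_offset p _ φ hφ (by omega) (by omega)]
  omega

/-- With path-edge labels φ(e_i) = ⌈i/2⌉ for i ≢ p (mod 2) and
φ(e_i) = m − ⌊p/2⌋ + ⌈i/2⌉ for i ≡ p (mod 2), the consecutive-pair sum
g(i) = φ(e_i) + φ(e_{i+1}) is strictly increasing on 1 ≤ i ≤ p−1. -/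
theorem stmt_2 (p m : ℕ) (hp : 1 ≤ p) (hm : p ≤ m)
    (φ : ℕ → ℕ)
    (hφ : ∀ i, 1 ≤ i → i ≤ p →
      φ i = if i % 2 = p % 2 then (i + 1) / 2 else m - p / 2 + (i + 1) / 2) :
    ∀ i j, 1 ≤ i → i < j → j ≤ p - 1 →
      φ i + φ (i + 1) < φ j + φ (j + 1) :=
  stmt_2_general p m φ hφ
end

section
/- Let p ≥ 1 and m ≥ p, and define φ(e_i) = ⌈i/2⌉ if i ≢ p (mod 2) and φ(e_i) = m − ⌊p/2⌋ + ⌈i/2⌉ if i ≡ p (mod 2), for 1 ≤ i ≤ p. Then for all 1 ≤ i ≤ p−1 we have m − ⌊p/2⌋ + 2 ≤ φ(e_i) + φ(e_{i+1}) ≤ m + ⌈p/2⌉. -/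
/-! Exactly one of two consecutive edges carries the shift `m - ⌊p/2⌋`, and
`⌈i/2⌉ + ⌈(i+1)/2⌉ = i + 1`, so the vertex sum at `v_i` is `m - ⌊p/2⌋ + i + 1`.
It increases with `i`, from `m - ⌊p/2⌋ + 2` at `i = 1` to `m - ⌊p/2⌋ + p = m + ⌈p/2⌉`
at `i = p - 1` (the subtraction is exact because `⌊p/2⌋ ≤ p ≤ m`). -/

theorem Nat.div_two_add_succ_div_two (n : ℕ) : n / 2 + (n + 1) / 2 = n := by
  omega

def shiftedHalfLabel (c q i : ℕ) : ℕ :=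
  if i % 2 = q % 2 then (i + 1) / 2 else c + (i + 1) / 2

theorem shiftedHalfLabel_add_succ (c q i : ℕ) :
    shiftedHalfLabel c q i + shiftedHalfLabel c q (i + 1) = c + (i + 1) := by
  have hceil := Nat.div_two_add_succ_div_two (i + 1)
  unfold shiftedHalfLabel
  split_ifs <;> omega

theorem stmt_3_general (p m : ℕ) (hm : p ≤ m)
    (φ : ℕ → ℕ)
    (hφ : ∀ i, 1 ≤ i → i ≤ p →
      φ i = if i % 2 = p % 2 then (i + 1) / 2 else m - p / 2 + (i + 1) / 2) :
    ∀ i, 1 ≤ i → i ≤ p - 1 →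
      m - p / 2 + 2 ≤ φ i + φ (i + 1) ∧ φ i + φ (i + 1) ≤ m + (p + 1) / 2 := by
  intro i hi hip
  have hsum : φ i + φ (i + 1) = m - p / 2 + (i + 1) := by
    rw [hφ i hi (by omega), hφ (i + 1) (by omega) (by omega)]
    exact shiftedHalfLabel_add_succ (m - p / 2) p i
  have hhalves := Nat.div_two_add_succ_div_two p
  omega

/-- With the same path-edge labeling, every consecutive-pair sum
satisfies m − ⌊p/2⌋ + 2 ≤ φ(e_i) + φ(e_{i+1}) ≤ m + ⌈p/2⌉. -/
theorem stmt_3 (p m : ℕ) (hp : 1 ≤ p) (hm : p ≤ m)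
    (φ : ℕ → ℕ)
    (hφ : ∀ i, 1 ≤ i → i ≤ p →
      φ i = if i % 2 = p % 2 then (i + 1) / 2 else m - p / 2 + (i + 1) / 2) :
    ∀ i, 1 ≤ i → i ≤ p - 1 →
      m - p / 2 + 2 ≤ φ i + φ (i + 1) ∧ φ i + φ (i + 1) ≤ m + (p + 1) / 2 :=
  stmt_3_general p m hm φ hφ
end

section
/- Every caterpillar admits an antimagic orientation. -/
/-!
Let `w 0, …, w k` be the spine. Orient every spine edge from `w i` to `w (i + 1)` and every leaf
edge towards the spine; give the spine edges the labels `1, …, k` and the leaf edges the labels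
`k + 1, …, m`. A leaf then has sum `≤ -(k + 1)`, a spine vertex without leaves (necessarily an
inner one) has sum `a - a'` with `1 ≤ a, a' ≤ k`, and a spine vertex with leaves has sum `≥ k`.

The bare spine vertices cut the spine edges into runs. The labels increase by one along each run,
so a spine vertex with leaves receives its leaf sum minus one, except `w k`, which receives its
leaf sum plus a spine label. Giving the even runs the lowest labels from left to right and stacking
the odd runs above them, each below the previous one, makes the jumps at the bare vertices
distinct: positive and decreasing into odd runs, negative and increasing into even runs. The leaf
labels are handed out in blocks, in increasing order of leaf count and with `w k` last among the
vertices of equal count; the leaf sums then increase along this order, by more than `k` whenever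
the count increases, which absorbs the extra spine label of `w k`.
-/

open SimpleGraph Finset
open scoped Classical

namespace Caterpillar

section Rank

variable {α β : Type*} [LinearOrder β] (s : Finset α) (κ : α → β)

def rank (x : α) : ℕ := #{y ∈ s | κ y < κ x}

variable {s κ}

lemma rank_lt_rank {x y : α} (hx : x ∈ s) (h : κ x < κ y) : rank s κ x < rank s κ y := by
  refine card_lt_card ⟨fun z hz => ?_, fun hsub => ?_⟩
  · simp only [mem_filter] at hz ⊢
    exact ⟨hz.1, hz.2.trans h⟩
  · simpa using hsub (mem_filter.2 ⟨hx, h⟩)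

lemma rank_lt_card {x : α} (hx : x ∈ s) : rank s κ x < #s :=
  card_lt_card (filter_ssubset.2 ⟨x, hx, lt_irrefl _⟩)

lemma rank_injOn (hκ : Set.InjOn κ s) : Set.InjOn (rank s κ) s := by
  intro x hx y hy hxy
  by_contra hne
  rcases lt_or_gt_of_ne (hκ.ne hx hy hne) with h | h
  · exact (rank_lt_rank hx h).ne hxy
  · exact (rank_lt_rank hy h).ne' hxy

lemma rank_eq_add_one_of_covBy (hκ : Set.InjOn κ s) {x y : α} (hx : x ∈ s)
    (h : κ x ⋖ κ y) : rank s κ y = rank s κ x + 1 := by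
  have : {z ∈ s | κ z < κ y} = insert x {z ∈ s | κ z < κ x} := by
    ext z
    simp only [mem_filter, mem_insert, h.lt_iff_le_left, le_iff_lt_or_eq]
    constructor
    · rintro ⟨hz, hlt | heq⟩
      · exact Or.inr ⟨hz, hlt⟩
      · exact Or.inl (hκ hz hx heq)
    · rintro (rfl | ⟨hz, hlt⟩)
      · exact ⟨hx, Or.inr rfl⟩
      · exact ⟨hz, Or.inl hlt⟩
  rw [rank, this, card_insert_of_notMem (by simp)]
  rfl

end Rank

section Zigzag

variable (k : ℕ) (c : ℕ → ℕ)

-- Spine edge `j ∈ [1, k]` joins `w (j - 1)` to `w j`, and `c i` is the number of leaves at `w i`.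
def run (j : ℕ) : ℕ := #{z ∈ Ico 1 j | c z = 0}

-- even runs first, from left to right; then the odd runs, later runs first
def zigzagKey (j : ℕ) : ℕ ×ₗ ℕ := toLex (if Even (run c j) then 0 else k - run c j, j)

-- `0` off `[1, k]`, so that the sums at `w 0` and `w k` need no special case
def spineLabel (j : ℕ) : ℕ :=
  if j ∈ Icc 1 k then rank (Icc 1 k) (zigzagKey k c) j + 1 else 0

variable {k c}

lemma run_add_one {j : ℕ} (hj : 1 ≤ j) : run c (j + 1) = run c j + if c j = 0 then 1 else 0 := by
  rw [run, Nat.Ico_succ_right_eq_insert_Ico hj, filter_insert]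
  split_ifs with h
  · rw [card_insert_of_notMem (by simp)]; rfl
  · rfl

lemma run_le_pred (j : ℕ) : run c j ≤ j - 1 :=
  (card_filter_le _ _).trans (by simp)

lemma run_ne_zero_of_odd {j : ℕ} (h : ¬ Even (run c j)) : run c j ≠ 0 := by
  rintro h0
  simp [h0] at h

lemma run_mono : Monotone (run c) := fun _ _ h =>
  card_le_card (filter_subset_filter _ (Ico_subset_Ico_right h))

lemma zigzagKey_injOn : Set.InjOn (zigzagKey k c) (Icc 1 k) := fun _ _ _ _ h =>
  (Prod.ext_iff.1 (toLex.injective h)).2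

lemma spineLabel_mem {j : ℕ} (hj : j ∈ Icc 1 k) : spineLabel k c j ∈ Icc 1 k := by
  have := rank_lt_card (κ := zigzagKey k c) hj
  rw [spineLabel, if_pos hj, mem_Icc]
  rw [Nat.card_Icc] at this
  omega

lemma spineLabel_eq_zero {j : ℕ} (hj : j ∉ Icc 1 k) : spineLabel k c j = 0 := if_neg hj

lemma spineLabel_le (j : ℕ) : spineLabel k c j ≤ k := by
  by_cases hj : j ∈ Icc 1 k
  · exact (mem_Icc.1 (spineLabel_mem hj)).2
  · rw [spineLabel_eq_zero hj]; exact Nat.zero_le _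

lemma spineLabel_injOn : Set.InjOn (spineLabel k c) (Icc 1 k) := fun i hi j hj h => by
  simp only [spineLabel, if_pos (mem_coe.1 hi), if_pos (mem_coe.1 hj)] at h
  exact rank_injOn (κ := zigzagKey k c) zigzagKey_injOn hi hj (by omega)

lemma spineLabel_lt_spineLabel {i j : ℕ} (hi : i ∈ Icc 1 k) (hj : j ∈ Icc 1 k)
    (h : zigzagKey k c i < zigzagKey k c j) : spineLabel k c i < spineLabel k c j := by
  simp only [spineLabel, if_pos hi, if_pos hj]
  exact Nat.add_lt_add_right (rank_lt_rank hi h) 1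

lemma spineLabel_one (hk : 1 ≤ k) : spineLabel k c 1 = 1 := by
  suffices {j ∈ Icc 1 k | zigzagKey k c j < zigzagKey k c 1} = ∅ by
    rw [spineLabel, if_pos (mem_Icc.2 ⟨le_rfl, hk⟩), rank, this, card_empty]
  refine filter_eq_empty_iff.2 fun j hj hlt => ?_
  have := (mem_Icc.1 hj).1
  simp [zigzagKey, run, Prod.Lex.toLex_lt_toLex] at hlt
  omega

lemma spineLabel_add_one {j : ℕ} (hj : 1 ≤ j) (hjk : j < k) (hc : c j ≠ 0) :
    spineLabel k c (j + 1) = spineLabel k c j + 1 := by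
  have hmem : j ∈ Icc 1 k := mem_Icc.2 ⟨hj, hjk.le⟩
  have hmem' : j + 1 ∈ Icc 1 k := mem_Icc.2 ⟨by omega, hjk⟩
  have hcov : zigzagKey k c j ⋖ zigzagKey k c (j + 1) := by
    rw [Prod.Lex.covBy_iff]
    left
    simp [zigzagKey, run_add_one hj, hc]
  simp only [spineLabel, if_pos hmem, if_pos hmem',
    rank_eq_add_one_of_covBy zigzagKey_injOn hmem hcov]

lemma zigzagKey_lt_of_even_of_lt {i j : ℕ} (hi : Even (run c i)) (hj : Even (run c j))
    (h : i < j) : zigzagKey k c i < zigzagKey k c j := by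
  simp [zigzagKey, hi, hj, Prod.Lex.toLex_lt_toLex, h]

lemma zigzagKey_lt_of_even_of_odd {i j : ℕ} (hjk : j ≤ k) (hi : Even (run c i))
    (hj : ¬ Even (run c j)) : zigzagKey k c i < zigzagKey k c j := by
  have := run_le_pred (c := c) j
  have := run_ne_zero_of_odd hj
  simp [zigzagKey, hi, hj, Prod.Lex.toLex_lt_toLex]
  omega

lemma zigzagKey_lt_of_odd_of_run_lt {i j : ℕ} (hjk : j ≤ k) (hi : ¬ Even (run c i))
    (hj : ¬ Even (run c j)) (h : run c i < run c j) : zigzagKey k c j < zigzagKey k c i := by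
  have := run_le_pred (c := c) j
  have := run_ne_zero_of_odd hj
  simp [zigzagKey, hi, hj, Prod.Lex.toLex_lt_toLex]
  omega

lemma spineLabel_jump_ne {i j : ℕ} (hi : 1 ≤ i) (hij : i < j) (hjk : j < k)
    (hci : c i = 0) (hcj : c j = 0) :
    (spineLabel k c i : ℤ) - spineLabel k c (i + 1) ≠
      spineLabel k c j - spineLabel k c (j + 1) := by
  have lt : ∀ {m n}, 1 ≤ m → m ≤ k → 1 ≤ n → n ≤ k →
      zigzagKey k c m < zigzagKey k c n → (spineLabel k c m : ℤ) < spineLabel k c n :=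
    fun h1 h2 h3 h4 h => by
      exact_mod_cast spineLabel_lt_spineLabel (mem_Icc.2 ⟨h1, h2⟩) (mem_Icc.2 ⟨h3, h4⟩) h
  have hi' : run c (i + 1) = run c i + 1 := by simp [run_add_one hi, hci]
  have hj' : run c (j + 1) = run c j + 1 := by simp [run_add_one (hi.trans hij.le), hcj]
  have hij' : run c (i + 1) ≤ run c j := run_mono hij
  have hpi : Even (run c (i + 1)) ↔ ¬ Even (run c i) := by rw [hi', Nat.even_add_one]
  have hpj : Even (run c (j + 1)) ↔ ¬ Even (run c j) := by rw [hj', Nat.even_add_one]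
  by_cases hei : Even (run c i) <;> by_cases hej : Even (run c j)
  · have := lt (m := i) (n := j) hi (by omega) (by omega) hjk.le
      (zigzagKey_lt_of_even_of_lt hei hej hij)
    have := lt (m := j + 1) (n := i + 1) (by omega) hjk (by omega) (by omega)
      (zigzagKey_lt_of_odd_of_run_lt (by omega) (by tauto) (by tauto) (by omega))
    omega
  · have := lt (m := i) (n := i + 1) hi (by omega) (by omega) (by omega)
      (zigzagKey_lt_of_even_of_odd (by omega) hei (by tauto))
    have := lt (m := j + 1) (n := j) (by omega) hjk (by omega) hjk.le
      (zigzagKey_lt_of_even_of_odd hjk.le (by tauto) hej)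
    omega
  · have := lt (m := i + 1) (n := i) (by omega) (by omega) hi (by omega)
      (zigzagKey_lt_of_even_of_odd (by omega) (by tauto) hei)
    have := lt (m := j) (n := j + 1) (by omega) hjk.le (by omega) hjk
      (zigzagKey_lt_of_even_of_odd hjk hej (by tauto))
    omega
  · have := lt (m := j) (n := i) (by omega) hjk.le hi (by omega)
      (zigzagKey_lt_of_odd_of_run_lt (by omega) hei hej (by omega))
    have := lt (m := i + 1) (n := j + 1) (by omega) (by omega) (by omega) hjk
      (zigzagKey_lt_of_even_of_lt (by tauto) (by tauto) (by omega))
    omega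

end Zigzag

lemma sum_add_card_add_mul_le_sum {ι : Type*} {A B : Finset ι} (f : ι → ℕ) {m : ℕ}
    (hA : A.Nonempty) (hAB : ∀ a ∈ A, ∀ b ∈ B, f a < f b) (hcard : #A ≤ #B)
    (hm : ∀ b ∈ B, m ≤ f b) : ∑ a ∈ A, f a + #A + (#B - #A) * m ≤ ∑ b ∈ B, f b := by
  obtain ⟨a₀, ha₀, hmax⟩ := exists_max_image A f hA
  set μ := max (f a₀ + 1) m
  have hA_le : ∑ a ∈ A, f a ≤ #A * f a₀ := by simpa using sum_le_card_nsmul A f _ hmax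
  have hB_ge : #B * μ ≤ ∑ b ∈ B, f b := by
    simpa using card_nsmul_le_sum B f μ fun b hb => max_le (hAB a₀ ha₀ b hb) (hm b hb)
  calc ∑ a ∈ A, f a + #A + (#B - #A) * m ≤ #A * (f a₀ + 1) + (#B - #A) * μ := by
        rw [mul_add_one]
        gcongr
        exact le_max_right _ _
    _ ≤ #A * μ + (#B - #A) * μ := by gcongr; exact le_max_left _ _
    _ = #B * μ := by rw [← add_mul, Nat.add_sub_cancel' hcard]
    _ ≤ ∑ b ∈ B, f b := hB_ge

section Leaves

variable (k : ℕ) {Λ : Type*} [Fintype Λ] (π : Λ → ℕ)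

def leafCount (i : ℕ) : ℕ := #{x | π x = i}

-- the order in which the spine vertices receive their blocks of leaf labels
def blockKey (i : ℕ) : ℕ ×ₗ ℕ := toLex (2 * leafCount π i + if i = k then 1 else 0, i)

noncomputable def leafKey (x : Λ) : (ℕ ×ₗ ℕ) ×ₗ Fin (Fintype.card Λ) :=
  toLex (blockKey k π (π x), Fintype.equivFin Λ x)

noncomputable def leafLabel (x : Λ) : ℕ := k + 1 + rank univ (leafKey k π) x

noncomputable def leafSum (i : ℕ) : ℕ := ∑ x with π x = i, leafLabel k π x

variable {k π}

lemma leafLabel_injective : Function.Injective (leafLabel k π) := by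
  intro x y h
  have hκ : Set.InjOn (leafKey k π) (univ : Finset Λ) := fun x _ y _ hxy =>
    (Fintype.equivFin Λ).injective (Prod.ext_iff.1 (toLex.injective hxy)).2
  exact rank_injOn hκ (mem_univ x) (mem_univ y) (by simpa [leafLabel] using h)

lemma leafLabel_mem (x : Λ) : leafLabel k π x ∈ Icc (k + 1) (k + Fintype.card Λ) := by
  have := rank_lt_card (κ := leafKey k π) (mem_univ x)
  rw [card_univ] at this
  simp only [leafLabel, mem_Icc]
  omega

lemma leafLabel_lt_of_blockKey_lt {x y : Λ} (h : blockKey k π (π x) < blockKey k π (π y)) :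
    leafLabel k π x < leafLabel k π y := by
  have := rank_lt_rank (κ := leafKey k π) (mem_univ x) (Prod.Lex.toLex_lt_toLex.2 (Or.inl h))
  simp only [leafLabel]
  omega

lemma leafSum_eq_zero {i : ℕ} (h : leafCount π i = 0) : leafSum k π i = 0 := by
  rw [leafCount, card_eq_zero] at h
  simp [leafSum, h]

lemma le_leafSum {i : ℕ} (h : leafCount π i ≠ 0) : k + 1 ≤ leafSum k π i := by
  obtain ⟨x, hx⟩ := card_pos.1 (Nat.pos_of_ne_zero h)
  exact (mem_Icc.1 (leafLabel_mem x)).1.trans (single_le_sum (fun _ _ => Nat.zero_le _) hx)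

lemma leafCount_add_le_of_blockKey_lt {i j : ℕ} (h : blockKey k π i < blockKey k π j) :
    2 * leafCount π i + (if i = k then 1 else 0) ≤
      2 * leafCount π j + (if j = k then 1 else 0) := by
  rcases Prod.Lex.toLex_lt_toLex.1 h with h | ⟨h, -⟩ <;> simp only at h <;> omega

lemma leafSum_add_le_of_blockKey_lt {i j : ℕ} (hi : leafCount π i ≠ 0)
    (h : blockKey k π i < blockKey k π j) :
    leafSum k π i + leafCount π i + (leafCount π j - leafCount π i) * (k + 1) ≤ leafSum k π j :=
  sum_add_card_add_mul_le_sum (leafLabel k π) (card_pos.1 (Nat.pos_of_ne_zero hi))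
    (fun a ha b hb => leafLabel_lt_of_blockKey_lt (by
      rwa [(mem_filter.1 ha).2, (mem_filter.1 hb).2]))
    (by
      have := leafCount_add_le_of_blockKey_lt h
      split_ifs at this <;> unfold leafCount at this <;> omega)
    (fun b _ => (mem_Icc.1 (leafLabel_mem b)).1)

end Leaves

section VertexSums

variable (k : ℕ) {Λ : Type*} [Fintype Λ] (π : Λ → ℕ)

/-- The oriented sum at spine vertex `i` when every leaf edge points into the spine and every spine
edge points from vertex `j - 1` to vertex `j`. -/
noncomputable def spineSum (i : ℕ) : ℤ :=
  leafSum k π i + spineLabel k (leafCount π) i - spineLabel k (leafCount π) (i + 1)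

variable {k π}

lemma spineSum_of_lt {i : ℕ} (hik : i < k) (hi : leafCount π i ≠ 0) :
    spineSum k π i = leafSum k π i - 1 := by
  have : spineLabel k (leafCount π) (i + 1) = spineLabel k (leafCount π) i + 1 := by
    rcases Nat.eq_zero_or_pos i with rfl | hi1
    · rw [spineLabel_one (by omega), spineLabel_eq_zero (by simp)]
    · exact spineLabel_add_one hi1 hik hi
  rw [spineSum, this]
  push_cast
  ring

lemma spineSum_self : spineSum k π k = leafSum k π k + spineLabel k (leafCount π) k := by
  simp [spineSum, spineLabel_eq_zero (show k + 1 ∉ Icc 1 k by simp)]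

lemma le_spineSum {i : ℕ} (hik : i ≤ k) (hi : leafCount π i ≠ 0) : (k : ℤ) ≤ spineSum k π i := by
  have := le_leafSum (k := k) hi
  rcases hik.lt_or_eq with hik | rfl
  · rw [spineSum_of_lt hik hi]
    omega
  · rw [spineSum_self]
    omega

lemma spineSum_bounds_of_leafCount_eq_zero {i : ℕ} (hi1 : 1 ≤ i) (hik : i < k)
    (hi : leafCount π i = 0) : -(k : ℤ) < spineSum k π i ∧ spineSum k π i < k := by
  have h1 := mem_Icc.1 (spineLabel_mem (c := leafCount π) (mem_Icc.2 ⟨hi1, hik.le⟩))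
  have h2 := mem_Icc.1 (spineLabel_mem (c := leafCount π) (j := i + 1) (mem_Icc.2 ⟨by omega, hik⟩))
  simp only [spineSum, leafSum_eq_zero hi]
  omega

lemma spineSum_lt_of_blockKey_lt {i j : ℕ} (hik : i ≤ k) (hjk : j ≤ k)
    (hi : leafCount π i ≠ 0) (hj : leafCount π j ≠ 0) (h : blockKey k π i < blockKey k π j) :
    spineSum k π i < spineSum k π j := by
  have hcount := leafCount_add_le_of_blockKey_lt h
  have hsum := leafSum_add_le_of_blockKey_lt hi h
  have hij : i ≠ j := by rintro rfl; exact lt_irrefl _ h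
  rcases hik.lt_or_eq with hik | rfl <;> rcases hjk.lt_or_eq with hjk | rfl
  · rw [spineSum_of_lt hik hi, spineSum_of_lt hjk hj]
    omega
  · rw [spineSum_of_lt hik hi, spineSum_self]
    omega
  · -- `w k` precedes only vertices with more leaves
    have := spineLabel_le (k := i) (c := leafCount π) i
    have : i + 1 ≤ (leafCount π j - leafCount π i) * (i + 1) :=
      Nat.le_mul_of_pos_left _ (by simp [hij.symm] at hcount; omega)
    rw [spineSum_self, spineSum_of_lt hjk hj]
    omega
  · exact absurd rfl hij

lemma spineSum_injOn (hend : ∀ i ≤ k, leafCount π i = 0 → 1 ≤ i ∧ i < k) :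
    Set.InjOn (spineSum k π) (Set.Iic k) := by
  intro i (hi : i ≤ k) j (hj : j ≤ k) h
  by_contra hne
  by_cases hci : leafCount π i = 0 <;> by_cases hcj : leafCount π j = 0
  · obtain ⟨hi1, hik⟩ := hend i hi hci
    obtain ⟨hj1, hjk⟩ := hend j hj hcj
    simp only [spineSum, leafSum_eq_zero hci, leafSum_eq_zero hcj, Nat.cast_zero, zero_add] at h
    rcases lt_or_gt_of_ne hne with hij | hij
    · exact spineLabel_jump_ne hi1 hij hjk hci hcj h
    · exact spineLabel_jump_ne hj1 hij hik hcj hci h.symm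
  · exact (spineSum_bounds_of_leafCount_eq_zero (hend i hi hci).1 (hend i hi hci).2 hci).2.not_ge
      (h ▸ le_spineSum hj hcj)
  · exact (spineSum_bounds_of_leafCount_eq_zero (hend j hj hcj).1 (hend j hj hcj).2 hcj).2.not_ge
      (h ▸ le_spineSum hi hci)
  · have hkey : blockKey k π i ≠ blockKey k π j := fun hk =>
      hne (Prod.ext_iff.1 (toLex.injective hk)).2
    rcases lt_or_gt_of_ne hkey with hlt | hlt
    · exact (spineSum_lt_of_blockKey_lt hi hj hci hcj hlt).ne h
    · exact (spineSum_lt_of_blockKey_lt hj hi hcj hci hlt).ne' h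

lemma spineSum_ne_neg_leafLabel (hend : ∀ i ≤ k, leafCount π i = 0 → 1 ≤ i ∧ i < k) {i : ℕ}
    (hi : i ≤ k) (x : Λ) : spineSum k π i ≠ -(leafLabel k π x : ℤ) := by
  have := (mem_Icc.1 (leafLabel_mem (k := k) (π := π) x)).1
  by_cases hci : leafCount π i = 0
  · have := (spineSum_bounds_of_leafCount_eq_zero (hend i hi hci).1 (hend i hi hci).2 hci).1
    omega
  · have := le_spineSum hi hci
    omega

end VertexSums

section Parametrization

variable {V E : Type*} [Fintype V] [Fintype E] {G : SimpleGraph V} {ι : E → Sym2 V}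

lemma edgeFinset_eq_image (hrange : Set.range ι = G.edgeSet) : G.edgeFinset = univ.image ι := by
  ext e
  simp [← hrange]

lemma sum_filter_edgeFinset_extend (hι : Function.Injective ι) (hrange : Set.range ι = G.edgeSet)
    (f : E → ℕ) {p : Sym2 V → V} {q : E → V} (hpq : ∀ e, p (ι e) = q e) (u : V) :
    ∑ e ∈ G.edgeFinset.filter (fun e => p e = u), ((Function.extend ι f 0 e : ℕ) : ℤ) =
      ∑ e with q e = u, (f e : ℤ) := by
  rw [edgeFinset_eq_image hrange, filter_image, sum_image hι.injOn]
  simp [hpq, hι.extend_apply]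

lemma bijOn_extend (hι : Function.Injective ι) (hrange : Set.range ι = G.edgeSet) {f : E → ℕ}
    (hf : Function.Injective f) (hf_mem : ∀ e, f e ∈ Icc 1 (Fintype.card E)) :
    Set.BijOn (Function.extend ι f 0) G.edgeSet (Set.Icc 1 G.edgeFinset.card) := by
  have hcard : G.edgeFinset.card = Fintype.card E := by
    rw [edgeFinset_eq_image hrange, card_image_of_injective _ hι, card_univ]
  have hmaps : Set.MapsTo (Function.extend ι f 0) G.edgeSet (Set.Icc 1 G.edgeFinset.card) := by
    rw [← hrange]
    rintro _ ⟨e, rfl⟩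
    rw [hι.extend_apply, hcard, ← coe_Icc]
    exact hf_mem e
  have hinj : Set.InjOn (Function.extend ι f 0) G.edgeSet := by
    rw [← hrange]
    rintro _ ⟨e, rfl⟩ _ ⟨e', rfl⟩ h
    rw [hι.extend_apply, hι.extend_apply] at h
    rw [hf h]
  refine ⟨hmaps, hinj, ?_⟩
  rw [← coe_edgeFinset, ← coe_Icc] at hmaps ⊢
  rw [← coe_edgeFinset] at hinj
  exact surjOn_of_injOn_of_card_le _ hmaps hinj (by simp)

theorem exists_antimagic_orientation_of_parametrization (hι : Function.Injective ι)
    (hrange : Set.range ι = G.edgeSet) {tail head : E → V} (hth : ∀ e, ι e = s(tail e, head e))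
    {f : E → ℕ} (hf : Function.Injective f) (hf_mem : ∀ e, f e ∈ Icc 1 (Fintype.card E))
    (hsum : Function.Injective fun u =>
      ∑ e with head e = u, (f e : ℤ) - ∑ e with tail e = u, (f e : ℤ)) :
    ∃ (tail head : Sym2 V → V) (φ : Sym2 V → ℕ),
      (∀ e ∈ G.edgeSet, e = s(tail e, head e)) ∧
      Set.BijOn φ G.edgeSet (Set.Icc 1 G.edgeFinset.card) ∧
      ∀ u v : V, u ≠ v →
        ((∑ e ∈ G.edgeFinset.filter (fun e => head e = u), (φ e : ℤ)) -
         (∑ e ∈ G.edgeFinset.filter (fun e => tail e = u), (φ e : ℤ))) ≠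
        ((∑ e ∈ G.edgeFinset.filter (fun e => head e = v), (φ e : ℤ)) -
         (∑ e ∈ G.edgeFinset.filter (fun e => tail e = v), (φ e : ℤ))) := by
  let junk : Sym2 V → V := fun e => (Quot.out e).1
  have htail := hι.extend_apply tail junk
  have hhead := hι.extend_apply head junk
  refine ⟨Function.extend ι tail junk, Function.extend ι head junk, Function.extend ι f 0, ?_,
    bijOn_extend hι hrange hf hf_mem, fun u v huv => ?_⟩
  · rw [← hrange]
    rintro _ ⟨e, rfl⟩
    rw [htail, hhead, hth]
  · simp only [sum_filter_edgeFinset_extend hι hrange f htail,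
      sum_filter_edgeFinset_extend hι hrange f hhead]
    exact hsum.ne huv

end Parametrization

section Spine

variable {V : Type*} [Fintype V]

structure IsSpine (G : SimpleGraph V) {k : ℕ} (w : Fin (k + 1) → V) : Prop where
  injective : Function.Injective w
  mem_range_iff : ∀ x : V, x ∈ Set.range w ↔ G.degree x ≠ 1
  adj_iff : ∀ i j : Fin (k + 1), G.Adj (w i) (w j) ↔ ((i : ℕ) + 1 = j ∨ (j : ℕ) + 1 = i)

abbrev Leaf {k : ℕ} (w : Fin (k + 1) → V) : Type _ := {x : V // x ∉ Set.range w}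

variable {k : ℕ} {w : Fin (k + 1) → V}

def edgeTail (w : Fin (k + 1) → V) : Fin k ⊕ Leaf w → V
  | .inl i => w i.castSucc
  | .inr x => x

def edgeHead (π : Leaf w → Fin (k + 1)) : Fin k ⊕ Leaf w → V
  | .inl i => w i.succ
  | .inr x => w (π x)

noncomputable def edgeLabel (π : Leaf w → Fin (k + 1)) : Fin k ⊕ Leaf w → ℕ
  | .inl i => spineLabel k (leafCount (Fin.val ∘ π)) (i + 1)
  | .inr x => leafLabel k (Fin.val ∘ π) x

variable {π : Leaf w → Fin (k + 1)}

lemma edgeLabel_mem (e : Fin k ⊕ Leaf w) :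
    edgeLabel π e ∈ Icc 1 (Fintype.card (Fin k ⊕ Leaf w)) := by
  rw [Fintype.card_sum, Fintype.card_fin, mem_Icc]
  rcases e with i | x
  · have := mem_Icc.1 (spineLabel_mem (k := k) (c := leafCount (Fin.val ∘ π)) (j := i + 1)
      (mem_Icc.2 ⟨by omega, i.2⟩))
    simp only [edgeLabel]
    omega
  · have := mem_Icc.1 (leafLabel_mem (k := k) (π := Fin.val ∘ π) x)
    simp only [edgeLabel]
    omega

lemma edgeLabel_injective : Function.Injective (edgeLabel π) := by
  rintro (i | x) (j | y) h <;> simp only [edgeLabel] at h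
  · have := spineLabel_injOn (mem_coe.2 (mem_Icc.2 ⟨by omega, i.2⟩))
      (mem_coe.2 (mem_Icc.2 ⟨by omega, j.2⟩)) h
    rw [Fin.ext (by omega : (i : ℕ) = j)]
  · have := spineLabel_le (k := k) (c := leafCount (Fin.val ∘ π)) (i + 1)
    have := (mem_Icc.1 (leafLabel_mem (k := k) (π := Fin.val ∘ π) y)).1
    omega
  · have := spineLabel_le (k := k) (c := leafCount (Fin.val ∘ π)) (j + 1)
    have := (mem_Icc.1 (leafLabel_mem (k := k) (π := Fin.val ∘ π) x)).1
    omega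
  · rw [leafLabel_injective h]

lemma orientedSum_leaf (x : Leaf w) :
    ∑ e with edgeHead π e = x, (edgeLabel π e : ℤ) -
      ∑ e with edgeTail w e = x, (edgeLabel π e : ℤ) = -(leafLabel k (Fin.val ∘ π) x : ℤ) := by
  have hleaf : ∀ j, w j ≠ x := fun j h => x.2 ⟨j, h⟩
  rw [sum_filter, sum_filter]
  simp [Fintype.sum_sum_type, edgeHead, edgeTail, edgeLabel, hleaf, Subtype.val_inj]

namespace IsSpine

variable {G : SimpleGraph V}

lemma exists_adj_iff_of_notMem (hs : IsSpine G w) (hG : G.Connected) {x : V}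
    (hx : x ∉ Set.range w) : ∃ i, ∀ y, G.Adj x y ↔ y = w i := by
  have hleaf : ∀ {x}, x ∉ Set.range w → ∃! y, G.Adj x y := fun hx =>
    degree_eq_one_iff_existsUnique_adj.1 (not_not.1 (mt (hs.mem_range_iff _).2 hx))
  obtain ⟨y, hxy, hy⟩ := hleaf hx
  suffices hyw : y ∈ Set.range w by
    obtain ⟨i, rfl⟩ := hyw
    exact ⟨i, fun z => ⟨hy z, fun h => h ▸ hxy⟩⟩
  by_contra hyw
  obtain ⟨z, hyz, hz⟩ := hleaf hyw
  -- `x` and `y` would form a component of their own, missing the spine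
  obtain ⟨p⟩ := hG.preconnected x (w 0)
  obtain ⟨d, -, hd, hd'⟩ := p.exists_boundary_dart {x, y} (by simp)
    (by rintro (h | h) <;> [exact hx ⟨0, h⟩; exact hyw ⟨0, h⟩])
  rcases hd with hd | hd
  · exact hd' (Or.inr (hy _ (hd ▸ d.adj)))
  · exact hd' (Or.inl ((hz _ (hd ▸ d.adj)).trans (hz _ hxy.symm).symm))

lemma exists_leaf_adj_of_end (hs : IsSpine G w) (hG : G.Connected) (hV : 2 ≤ Fintype.card V)
    (i : Fin (k + 1)) (hi : (i : ℕ) = 0 ∨ (i : ℕ) = k) : ∃ x ∉ Set.range w, G.Adj (w i) x := by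
  obtain ⟨v, hv⟩ := Fintype.exists_ne_of_one_lt_card hV (w i)
  have hpos : 0 < G.degree (w i) := (hG.preconnected (w i) v).degree_pos_left hv.symm
  have hdeg : G.degree (w i) ≠ 1 := (hs.mem_range_iff _).1 ⟨i, rfl⟩
  obtain ⟨y₁, hy₁, y₂, hy₂, hne⟩ := one_lt_card.1
    (show 1 < (G.neighborFinset (w i)).card by rw [card_neighborFinset_eq_degree]; omega)
  rw [mem_neighborFinset] at hy₁ hy₂
  by_contra! h
  obtain ⟨j₁, rfl⟩ := not_not.1 fun hj => (h _ hj hy₁)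
  obtain ⟨j₂, rfl⟩ := not_not.1 fun hj => (h _ hj hy₂)
  have h₁ := (hs.adj_iff _ _).1 hy₁
  have h₂ := (hs.adj_iff _ _).1 hy₂
  exact hne (congrArg w (Fin.ext (by omega)))

lemma range_edge (hs : IsSpine G w) (hπ : ∀ (x : Leaf w) y, G.Adj x y ↔ y = w (π x)) :
    Set.range (fun e => s(edgeTail w e, edgeHead π e)) = G.edgeSet := by
  ext e
  constructor
  · rintro ⟨e | x, rfl⟩
    · exact (hs.adj_iff _ _).2 (by simp)
    · exact (hπ x _).2 rfl
  · induction e using Sym2.ind with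
    | _ u v =>
    intro huv
    rw [mem_edgeSet] at huv
    by_cases hu : u ∈ Set.range w
    · by_cases hv : v ∈ Set.range w
      · obtain ⟨a, rfl⟩ := hu
        obtain ⟨b, rfl⟩ := hv
        rcases (hs.adj_iff a b).1 huv with h | h
        · refine ⟨.inl ⟨a, by omega⟩, ?_⟩
          simp [edgeTail, edgeHead, h]
        · refine ⟨.inl ⟨b, by omega⟩, Sym2.eq_swap.trans ?_⟩
          simp [edgeTail, edgeHead, h]
      · refine ⟨.inr ⟨v, hv⟩, Sym2.eq_swap.trans ?_⟩
        simp [edgeTail, edgeHead, (hπ ⟨v, hv⟩ u).1 huv.symm]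
    · exact ⟨.inr ⟨u, hu⟩, by simp [edgeTail, edgeHead, (hπ ⟨u, hu⟩ v).1 huv]⟩

lemma edge_injective (hs : IsSpine G w) :
    Function.Injective (fun e => s(edgeTail w e, edgeHead π e)) := by
  rintro (i | x) (j | y) h <;> simp only [edgeTail, edgeHead, Sym2.eq_iff] at h
  · rcases h with ⟨h, -⟩ | ⟨h, h'⟩
    · rw [Fin.castSucc_injective _ (hs.injective h)]
    · have := congrArg Fin.val (hs.injective h)
      have := congrArg Fin.val (hs.injective h')
      simp only [Fin.val_castSucc, Fin.val_succ] at *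
      omega
  · rcases h with ⟨h, -⟩ | ⟨-, h⟩ <;> exact (y.2 ⟨_, h⟩).elim
  · rcases h with ⟨h, -⟩ | ⟨h, -⟩ <;> exact (x.2 ⟨_, h.symm⟩).elim
  · rcases h with ⟨h, -⟩ | ⟨h, -⟩
    · rw [Subtype.ext h]
    · exact (x.2 ⟨_, h.symm⟩).elim

lemma interior_of_leafCount_eq_zero (hs : IsSpine G w) (hG : G.Connected) (hV : 2 ≤ Fintype.card V)
    (hπ : ∀ (x : Leaf w) y, G.Adj x y ↔ y = w (π x)) :
    ∀ i ≤ k, leafCount (Fin.val ∘ π) i = 0 → 1 ≤ i ∧ i < k := by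
  intro i hik hi
  by_contra hend
  obtain ⟨x, hx, hadj⟩ := hs.exists_leaf_adj_of_end hG hV ⟨i, by omega⟩ (by simp; omega)
  have hπx : π ⟨x, hx⟩ = ⟨i, by omega⟩ := hs.injective (((hπ ⟨x, hx⟩ _).1 hadj.symm).symm)
  rw [leafCount, card_eq_zero, filter_eq_empty_iff] at hi
  exact hi (mem_univ ⟨x, hx⟩) (by simp [hπx])

lemma orientedSum_spine (hs : IsSpine G w) (j : Fin (k + 1)) :
    ∑ e with edgeHead π e = w j, (edgeLabel π e : ℤ) -
      ∑ e with edgeTail w e = w j, (edgeLabel π e : ℤ) = spineSum k (Fin.val ∘ π) j := by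
  have hleaf : ∀ x : Leaf w, (x : V) ≠ w j := fun x h => x.2 ⟨j, h.symm⟩
  have h_in : ∑ i : Fin k, (if i.succ = j then
      (spineLabel k (leafCount (Fin.val ∘ π)) (i + 1) : ℤ) else 0) =
      spineLabel k (leafCount (Fin.val ∘ π)) j := by
    cases j using Fin.cases with
    | zero => simp [Fin.succ_ne_zero, spineLabel_eq_zero]
    | succ i₀ => simp [Fin.succ_inj]
  have h_out : ∑ i : Fin k, (if i.castSucc = j then
      (spineLabel k (leafCount (Fin.val ∘ π)) (i + 1) : ℤ) else 0) =
      spineLabel k (leafCount (Fin.val ∘ π)) (j + 1) := by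
    cases j using Fin.lastCases with
    | last => simp [Fin.castSucc_ne_last, spineLabel_eq_zero]
    | cast i₀ => simp
  have h_leaves : ∑ x : Leaf w, (if π x = j then (leafLabel k (Fin.val ∘ π) x : ℤ) else 0) =
      leafSum k (Fin.val ∘ π) j := by
    simp [leafSum, sum_filter, Fin.ext_iff]
  rw [sum_filter, sum_filter]
  simp only [Fintype.sum_sum_type, edgeHead, edgeTail, edgeLabel,
    hs.injective.eq_iff, hleaf, if_false, sum_const_zero, h_in, h_out, h_leaves, spineSum]
  ring

lemma orientedSum_injective (hs : IsSpine G w) (hG : G.Connected) (hV : 2 ≤ Fintype.card V)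
    (hπ : ∀ (x : Leaf w) y, G.Adj x y ↔ y = w (π x)) :
    Function.Injective fun u => ∑ e with edgeHead π e = u, (edgeLabel π e : ℤ) -
      ∑ e with edgeTail w e = u, (edgeLabel π e : ℤ) := by
  have hend := hs.interior_of_leafCount_eq_zero hG hV hπ
  intro u v h
  simp only at h
  by_cases hu : u ∈ Set.range w <;> by_cases hv : v ∈ Set.range w
  · obtain ⟨i, rfl⟩ := hu
    obtain ⟨j, rfl⟩ := hv
    rw [orientedSum_spine hs, orientedSum_spine hs] at h
    rw [Fin.ext (spineSum_injOn hend (Set.mem_Iic.2 (Nat.le_of_lt_succ i.2))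
      (Set.mem_Iic.2 (Nat.le_of_lt_succ j.2)) h)]
  · obtain ⟨i, rfl⟩ := hu
    rw [orientedSum_spine hs, orientedSum_leaf ⟨v, hv⟩] at h
    exact (spineSum_ne_neg_leafLabel hend (Nat.le_of_lt_succ i.2) _ h).elim
  · obtain ⟨j, rfl⟩ := hv
    rw [orientedSum_spine hs, orientedSum_leaf ⟨u, hu⟩] at h
    exact (spineSum_ne_neg_leafLabel hend (Nat.le_of_lt_succ j.2) _ h.symm).elim
  · rw [orientedSum_leaf ⟨u, hu⟩, orientedSum_leaf ⟨v, hv⟩, neg_inj, Nat.cast_inj] at h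
    exact congrArg Subtype.val (leafLabel_injective h)

end IsSpine

end Spine

end Caterpillar

open Caterpillar in
/-- Every caterpillar admits an antimagic orientation: there is a
choice of direction (tail e, head e) for every edge e, and a bijection
φ : E(G) → {1,…,m}, such that the oriented vertex sums (incoming labels minus
outgoing labels, as integers) are pairwise distinct. -/
theorem stmt_11 {V : Type*} [Fintype V] (G : SimpleGraph V)
    (hn : 3 ≤ Fintype.card V) (htree : G.IsTree)
    (hcat : ∃ (k : ℕ) (w : Fin (k + 1) → V), Function.Injective w ∧
      (∀ x : V, x ∈ Set.range w ↔ G.degree x ≠ 1) ∧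
      (∀ i j : Fin (k + 1), G.Adj (w i) (w j) ↔
        ((i : ℕ) + 1 = (j : ℕ) ∨ (j : ℕ) + 1 = (i : ℕ)))) :
    ∃ (tail head : Sym2 V → V) (φ : Sym2 V → ℕ),
      (∀ e ∈ G.edgeSet, e = s(tail e, head e)) ∧
      Set.BijOn φ G.edgeSet (Set.Icc 1 G.edgeFinset.card) ∧
      ∀ u v : V, u ≠ v →
        ((∑ e ∈ G.edgeFinset.filter (fun e => head e = u), (φ e : ℤ)) -
         (∑ e ∈ G.edgeFinset.filter (fun e => tail e = u), (φ e : ℤ))) ≠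
        ((∑ e ∈ G.edgeFinset.filter (fun e => head e = v), (φ e : ℤ)) -
         (∑ e ∈ G.edgeFinset.filter (fun e => tail e = v), (φ e : ℤ))) := by
  obtain ⟨k, w, hw, hdeg, hadj⟩ := hcat
  have hs : IsSpine G w := ⟨hw, hdeg, hadj⟩
  choose π hπ using fun x : Leaf w => hs.exists_adj_iff_of_notMem htree.1 x.2
  exact exists_antimagic_orientation_of_parametrization hs.edge_injective (hs.range_edge hπ)
    (fun _ => rfl) edgeLabel_injective edgeLabel_mem
    (hs.orientedSum_injective htree.1 (by omega) hπ)
end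

section
/- Let p ≥ 3 and m ≥ p. With path-edge labels φ(e_i) = ⌈i/2⌉ + U_i for i ≡ p (mod 2) and φ(e_i) = m − ⌊p/2⌋ + ⌈i/2⌉ for i ≢ p (mod 2), where (U_i) is non-decreasing with U_{i+2} ≥ U_i, suppose 1 ≤ j < k ≤ p−1. Then φ(e_j) + φ(e_{j+1}) < φ(e_k) + φ(e_{k+1}). -/
/-! Each pair `e_i, e_{i+1}` carries one label of each kind, so its sum is
`m - p / 2 + (i + 1) + U_q` with `q ∈ {i, i + 1}` of the parity of `p`: the linear part grows
strictly with `i`, and `U_q` does not decrease since `q` moves along one parity class. -/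

theorem apply_le_apply_of_modEq {α : Type*} [Preorder α] {f : ℕ → α} {d : ℕ}
    (hf : ∀ i, f i ≤ f (i + d)) {a b : ℕ} (hab : a ≤ b) (h : a ≡ b [MOD d]) : f a ≤ f b := by
  obtain ⟨n, hn⟩ := (Nat.modEq_iff_dvd' hab).1 h
  have hmono : Monotone fun n => f (a + d * n) :=
    monotone_nat_of_le_succ fun n => by simpa only [mul_add, mul_one, add_assoc] using hf (a + d * n)
  simpa only [mul_zero, add_zero, ← hn, Nat.add_sub_cancel' hab] using hmono (Nat.zero_le n)

/-- Of the two indices `i`, `i + 1`, the one with the parity of `p`. -/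
def parityIndex (p i : ℕ) : ℕ := i + (i + p) % 2

theorem parityIndex_modEq (p i : ℕ) : parityIndex p i ≡ p [MOD 2] := by
  unfold parityIndex Nat.ModEq; omega

theorem parityIndex_mono (p : ℕ) : Monotone (parityIndex p) := by
  intro i j hij; unfold parityIndex; omega

theorem add_succ_eq_of_parity_formula {p m : ℕ} {U φ : ℕ → ℕ}
    (hφ : ∀ i, 1 ≤ i → i ≤ p →
      φ i = if i % 2 = p % 2 then (i + 1) / 2 + U i else m - p / 2 + (i + 1) / 2)
    {i : ℕ} (hi : 1 ≤ i) (hip : i + 1 ≤ p) :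
    φ i + φ (i + 1) = m - p / 2 + (i + 1) + U (parityIndex p i) := by
  rw [hφ i hi (by omega), hφ (i + 1) (by omega) hip, parityIndex]
  rcases Nat.mod_two_eq_zero_or_one (i + p) with h | h <;>
    simp only [h, add_zero] <;> split_ifs <;> omega

theorem stmt_17_general (p m : ℕ)
    (U : ℕ → ℕ) (hU : ∀ i, U i ≤ U (i + 2))
    (φ : ℕ → ℕ)
    (hφ : ∀ i, 1 ≤ i → i ≤ p →
      φ i = if i % 2 = p % 2 then (i + 1) / 2 + U i else m - p / 2 + (i + 1) / 2) :
    ∀ j k, 1 ≤ j → j < k → k ≤ p - 1 →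
      φ j + φ (j + 1) < φ k + φ (k + 1) := by
  intro j k hj hjk hk
  rw [add_succ_eq_of_parity_formula hφ hj (by omega),
    add_succ_eq_of_parity_formula hφ (by omega) (by omega)]
  have hU_le : U (parityIndex p j) ≤ U (parityIndex p k) :=
    apply_le_apply_of_modEq hU (parityIndex_mono p hjk.le)
      ((parityIndex_modEq p j).trans (parityIndex_modEq p k).symm)
  omega

/-- With φ(e_i) = ⌈i/2⌉ + U_i for i ≡ p (mod 2) and
φ(e_i) = m − ⌊p/2⌋ + ⌈i/2⌉ for i ≢ p (mod 2), where (U_i) is non-decreasing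
along indices of equal parity, consecutive-pair sums are strictly increasing:
for 1 ≤ j < k ≤ p − 1 we have φ(e_j)+φ(e_{j+1}) < φ(e_k)+φ(e_{k+1}). -/
theorem stmt_17 (p m : ℕ) (hp : 3 ≤ p) (hm : p ≤ m)
    (U : ℕ → ℕ) (hU : ∀ i, U i ≤ U (i + 2))
    (φ : ℕ → ℕ)
    (hφ : ∀ i, 1 ≤ i → i ≤ p →
      φ i = if i % 2 = p % 2 then (i + 1) / 2 + U i else m - p / 2 + (i + 1) / 2) :
    ∀ j k, 1 ≤ j → j < k → k ≤ p - 1 →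
      φ j + φ (j + 1) < φ k + φ (k + 1) :=
  stmt_17_general p m U hU φ hφ
end
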